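/- For ω₀ > 0, r ≥ 0, φ ∈ [0,2π), and λ > 0, the function W(t) = ω₀ / (cosh(2r) + cos(2ω₀t/λ + φ)·sinh(2r)) satisfies the rescaled Gelfand–Dikii equation W² = ω₀² - (λ²/2)(Ẅ/W - (3/2)(Ẇ/W)²). -/

import Mathlib

/-!
Writing `W = ω₀ / D` with `D(t) = cosh 2r + sinh 2r · cos θ(t)`, `θ(t) = 2ω₀t/λ + φ`, the
combination `Ẅ/W - (3/2)(Ẇ/W)²` becomes `Ḋ²/(2D²) - D̈/D`. Multiplying the equation by `D²`
and using `θ̇ = 2ω₀/λ`, it reduces to `D² - 2 sinh 2r cos θ · D - sinh² 2r sin² θ = 1`,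
which is `cosh² 2r - sinh² 2r = 1`. The denominator never vanishes since `cosh x > |sinh x|`.
-/

open Real

/-- The Schwarzian derivative of any primitive of `W`. -/
noncomputable def schwarzianOfDeriv (W : ℝ → ℝ) (t : ℝ) : ℝ :=
  deriv (deriv W) t / W t - 3 / 2 * (deriv W t / W t) ^ 2

theorem schwarzianOfDeriv_const_div {D D' D'' : ℝ → ℝ} (hD : ∀ t, HasDerivAt D (D' t) t)
    (hD' : ∀ t, HasDerivAt D' (D'' t) t) (hD0 : ∀ t, D t ≠ 0) {a : ℝ} (ha : a ≠ 0) (t : ℝ) :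
    schwarzianOfDeriv (fun t => a / D t) t = D' t ^ 2 / (2 * D t ^ 2) - D'' t / D t := by
  have hderiv : deriv (fun t => a / D t) = fun t => -(a * D' t) / D t ^ 2 := by
    funext u
    exact (((hasDerivAt_const u a).div (hD u) (hD0 u)).congr_deriv (by ring)).deriv
  have hderiv2 : HasDerivAt (fun t => -(a * D' t) / D t ^ 2)
      ((-(a * D'' t) * D t ^ 2 - -(a * D' t) * (2 * D t ^ 1 * D' t)) / (D t ^ 2) ^ 2) t :=
    ((hD' t).const_mul a).neg.div ((hD t).pow 2) (pow_ne_zero 2 (hD0 t))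
  rw [schwarzianOfDeriv, hderiv, hderiv2.deriv]
  have := hD0 t
  field_simp
  ring

theorem cosh_add_mul_sinh_pos (x : ℝ) {y : ℝ} (hy : |y| ≤ 1) : 0 < cosh x + y * sinh x := by
  have h : |y * sinh x| < cosh x := calc
    |y * sinh x| ≤ |sinh x| := by
      rw [abs_mul]; exact mul_le_of_le_one_left (abs_nonneg _) hy
    _ = sinh |x| := abs_sinh x
    _ < cosh |x| := sinh_lt_cosh _
    _ = cosh x := cosh_abs x
  linarith [neg_abs_le (y * sinh x)]

theorem hasDerivAt_const_add_cos_mul {θ : ℝ → ℝ} {k : ℝ} (hθ : ∀ t, HasDerivAt θ k t)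
    (c s t : ℝ) :
    HasDerivAt (fun t => c + cos (θ t) * s) (-(sin (θ t) * k * s)) t := by
  simpa using (((hθ t).cos).mul_const s).const_add c

theorem hasDerivAt_neg_sin_mul {θ : ℝ → ℝ} {k : ℝ} (hθ : ∀ t, HasDerivAt θ k t) (s t : ℝ) :
    HasDerivAt (fun t => -(sin (θ t) * k * s)) (-(cos (θ t) * k * k * s)) t :=
  (((hθ t).sin.mul_const k).mul_const s).neg

theorem gelfand_dikii_constant_frequency_solutions_general
    (ω₀ r φ lam : ℝ) (hω₀ : 0 < ω₀)
    (hlam : 0 < lam)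
    (W : ℝ → ℝ)
    (hW : W = fun t =>
      ω₀ / (Real.cosh (2 * r) + Real.cos (2 * ω₀ * t / lam + φ) * Real.sinh (2 * r))) :
    ∀ t, (W t) ^ 2 =
      ω₀ ^ 2 - (lam ^ 2 / 2) *
        (deriv (deriv W) t / W t - (3 / 2) * (deriv W t / W t) ^ 2) := by
  intro t
  subst hW
  have hθ : ∀ t, HasDerivAt (fun t => 2 * ω₀ * t / lam + φ) (2 * ω₀ / lam) t := fun t => by
    simpa using (((hasDerivAt_id t).const_mul (2 * ω₀)).div_const lam).add_const φ
  have hD0 : ∀ t, cosh (2 * r) + cos (2 * ω₀ * t / lam + φ) * sinh (2 * r) ≠ 0 := fun t =>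
    (cosh_add_mul_sinh_pos _ (abs_cos_le_one _)).ne'
  change _ = _ - _ * schwarzianOfDeriv _ t
  rw [schwarzianOfDeriv_const_div (hasDerivAt_const_add_cos_mul hθ _ _)
    (hasDerivAt_neg_sin_mul hθ _) hD0 hω₀.ne']
  beta_reduce
  have hDt := hD0 t
  generalize 2 * ω₀ * t / lam + φ = θ at hDt ⊢
  have := hlam.ne'
  field_simp
  linear_combination -cosh_sq_sub_sinh_sq (2 * r) + sinh (2 * r) ^ 2 * sin_sq_add_cos_sq θ

/-- For `ω₀ > 0`, `r ≥ 0`, `φ ∈ [0,2π)` and `λ > 0`, the function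
`W(t) = ω₀ / (cosh(2r) + cos(2ω₀t/λ + φ) sinh(2r))` solves the rescaled Gelfand–Dikii
equation `W² = ω₀² - (λ²/2)(Ẅ/W - (3/2)(Ẇ/W)²)`. -/
theorem gelfand_dikii_constant_frequency_solutions
    (ω₀ r φ lam : ℝ) (hω₀ : 0 < ω₀) (hr : 0 ≤ r) (hφ : 0 ≤ φ ∧ φ < 2 * Real.pi)
    (hlam : 0 < lam)
    (W : ℝ → ℝ)
    (hW : W = fun t =>
      ω₀ / (Real.cosh (2 * r) + Real.cos (2 * ω₀ * t / lam + φ) * Real.sinh (2 * r))) :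
    ∀ t, (W t) ^ 2 =
      ω₀ ^ 2 - (lam ^ 2 / 2) *
        (deriv (deriv W) t / W t - (3 / 2) * (deriv W t / W t) ^ 2) :=
  gelfand_dikii_constant_frequency_solutions_general ω₀ r φ lam hω₀ hlam W hW
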